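/- There exists a function ρ from instruction sequences to closed terms of BTA with explicit substitution such that for every instruction sequence P, the term ρ(P) evaluates to the finite thread |P| (the thread extraction of P) and tsize(ρ(P)) ≤ 4·psize(P) + 1. -/

import Mathlib

/-- Boolean register names: `inp i` is input register `in:(i+1)`,
`aux i` is auxiliary register `aux:(i+1)`, `out` is the output register. -/
inductive Reg where
  | inp : ℕ → Reg
  | aux : ℕ → Reg
  | out : Reg
deriving DecidableEq

/-- Basic instructions: register reads/writes, and (for splitting instruction
sequences) `split p` and `reply p` for Boolean parameters `p`. -/
inductive BInstr where
  | get : Reg → BInstr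
  | set : Reg → Bool → BInstr
  | split : ℕ → BInstr
  | reply : ℕ → BInstr
deriving DecidableEq

/-- Primitive instructions. -/
inductive PInstr where
  | plain : BInstr → PInstr
  | pos : BInstr → PInstr
  | neg : BInstr → PInstr
  | jump : ℕ → PInstr
  | halt : PInstr
deriving DecidableEq

abbrev RegState := Reg → Bool

/-- State change caused by processing a basic instruction. -/
def BInstr.effect : BInstr → RegState → RegState
  | .set r b, s => Function.update s r b
  | _, s => s

/-- Reply produced by processing a basic instruction. -/
def BInstr.rpl : BInstr → RegState → Bool
  | .get r, s => s r
  | .set _ b, _ => b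
  | _, _ => false

def BInstr.isSplitReply : BInstr → Bool
  | .split _ => true
  | .reply _ => true
  | _ => false

/-- Single-thread execution of an instruction sequence on Boolean registers;
`none` means deadlock, `some s` means termination in register state `s`.
(`split`/`reply` instructions make no sense here and deadlock.) -/
def exec : List PInstr → RegState → Option RegState
  | [], _ => none
  | .plain a :: X, s =>
      if a.isSplitReply then none else exec X (a.effect s)
  | .pos a :: X, s =>
      if a.isSplitReply then none
      else if a.rpl s then exec X (a.effect s) else exec (X.drop 1) (a.effect s)
  | .neg a :: X, s =>
      if a.isSplitReply then none
      else if a.rpl s then exec (X.drop 1) (a.effect s) else exec X (a.effect s)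
  | .jump 0 :: _, _ => none
  | .jump (l+1) :: X, s => exec (X.drop l) s
  | .halt :: _, s => some s
termination_by X _ => X.length
decreasing_by all_goals (simp only [List.length_drop, List.length_cons]; omega)

/-- Initial register state: input registers `in:1 .. in:n` contain
`b 0, ..., b (n-1)`; all other registers contain `false`. -/
def initState (n : ℕ) (b : Fin n → Bool) : RegState := fun r =>
  match r with
  | .inp i => if h : i < n then b ⟨i, h⟩ else false
  | _ => false

/-- `X` computes the `n`-ary Boolean function `f`: for every input, execution
terminates (does not deadlock) with the output register containing `f b`. -/
def Computes {n : ℕ} (f : (Fin n → Bool) → Bool) (X : List PInstr) : Prop :=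
  ∀ b : Fin n → Bool, ∃ s : RegState,
    exec X (initState n b) = some s ∧ s Reg.out = f b

/-- Basic instructions allowed in `IS_br`. -/
def BrBasic : BInstr → Prop
  | .get (.inp _) => True
  | .get (.aux _) => True
  | .set (.aux _) _ => True
  | .set .out _ => True
  | _ => False

/-- Basic instructions allowed in `IS_br^na`. -/
def NaBasic : BInstr → Prop
  | .get (.inp _) => True
  | .set .out _ => True
  | _ => False

def InstrBasicOK (P : BInstr → Prop) : PInstr → Prop
  | .plain a => P a
  | .pos a => P a
  | .neg a => P a
  | _ => True

/-- Membership of `IS_br` (non-empty, only allowed basic instructions). -/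
def ISbr (X : List PInstr) : Prop :=
  X ≠ [] ∧ ∀ u ∈ X, InstrBasicOK BrBasic u

/-- Membership of `IS_br^na`. -/
def ISbrna (X : List PInstr) : Prop :=
  X ≠ [] ∧ ∀ u ∈ X, InstrBasicOK NaBasic u

/-- The primitive instruction contains the basic instruction `out.set:false`. -/
def UsesOutSetFalse : PInstr → Prop
  | .plain (.set .out false) => True
  | .pos (.set .out false) => True
  | .neg (.set .out false) => True
  | _ => False

/-- The class PLIS of Boolean function families computable by
polynomial-length instruction sequences from `IS_br`. -/
def PLIS (F : (n : ℕ) → (Fin n → Bool) → Bool) : Prop :=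
  ∃ h : Polynomial ℕ, ∀ n : ℕ, ∃ X : List PInstr,
    ISbr X ∧ Computes (F n) X ∧ X.length ≤ h.eval n

/-- Finite threads of basic thread algebra: `S` (termination), `D` (deadlock)
and postconditional composition `pcc p a q` (i.e. `p ⊴ a ⊵ q`). -/
inductive Thread where
  | S : Thread
  | D : Thread
  | pcc : Thread → BInstr → Thread → Thread

/-- Thread extraction `|X|` of an instruction sequence. -/
def textract : List PInstr → Thread
  | [] => .D
  | .plain a :: X => .pcc (textract X) a (textract X)
  | .pos a :: X => .pcc (textract X) a (textract (X.drop 1))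
  | .neg a :: X => .pcc (textract (X.drop 1)) a (textract X)
  | .jump 0 :: _ => .D
  | .jump (l+1) :: X => textract (X.drop l)
  | .halt :: _ => .S
termination_by X => X.length
decreasing_by all_goals (simp only [List.length_drop, List.length_cons]; omega)

/-- Terms of BTA with explicit substitution: `subst p x q` is `⟨p/x⟩q`. -/
inductive ESTerm where
  | S : ESTerm
  | D : ESTerm
  | var : ℕ → ESTerm
  | pcc : ESTerm → BInstr → ESTerm → ESTerm
  | subst : ESTerm → ℕ → ESTerm → ESTerm

/-- Evaluation of a term to a finite thread (an environment interprets the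
variables; for closed terms the result is independent of it). -/
def ESTerm.eval (env : ℕ → Thread) : ESTerm → Thread
  | .S => .S
  | .D => .D
  | .var x => env x
  | .pcc p a q => .pcc (p.eval env) a (q.eval env)
  | .subst p x q => q.eval (Function.update env x (p.eval env))

/-- Free variables; a term is closed iff it has none. -/
def ESTerm.fv : ESTerm → Finset ℕ
  | .S => ∅
  | .D => ∅
  | .var x => {x}
  | .pcc p _ q => p.fv ∪ q.fv
  | .subst p x q => p.fv ∪ (q.fv \ {x})

/-- Size of a term. -/
def ESTerm.tsize : ESTerm → ℕ
  | .S => 1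
  | .D => 1
  | .var _ => 1
  | .pcc p _ q => p.tsize + q.tsize + 1
  | .subst p _ q => p.tsize + q.tsize + 1

/-! Variable `x j` stands for the thread extracted from the suffix of `P` starting at position `j`.
Each instruction then becomes a term of size at most 3 over these variables (jumps past the end
become `D`), and the positions `n-1, …, 1` are bound by nested substitutions around the term of
position `0`, each costing one more node. Since an instruction only refers to later positions,
the term for position `j` lies in the scope of the substitutions for all later positions. -/

def posRef (n j : ℕ) : ESTerm := if j < n then .var j else .D

def instrTerm (n k : ℕ) : PInstr → ESTerm
  | .plain a => .pcc (posRef n (k + 1)) a (posRef n (k + 1))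
  | .pos a => .pcc (posRef n (k + 1)) a (posRef n (k + 2))
  | .neg a => .pcc (posRef n (k + 2)) a (posRef n (k + 1))
  | .jump 0 => .D
  | .jump (l + 1) => posRef n (k + 1 + l)
  | .halt => .S

def posTerm (P : List PInstr) (k : ℕ) : ESTerm :=
  match P.drop k with
  | [] => .D
  | u :: _ => instrTerm P.length k u

def substChain (P : List PInstr) : ℕ → ESTerm
  | 0 => posTerm P 0
  | k + 1 => .subst (posTerm P (k + 1)) (k + 1) (substChain P k)

def SuffixEnv (P : List PInstr) (k : ℕ) (env : ℕ → Thread) : Prop :=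
  ∀ j, k < j → j < P.length → env j = textract (P.drop j)

section FreeVariables

lemma fv_posRef_subset {n k j : ℕ} (hj : k < j) : (posRef n j).fv ⊆ Finset.Ioo k n := by
  unfold posRef
  split_ifs with h
  · simpa [ESTerm.fv] using ⟨hj, h⟩
  · simp [ESTerm.fv]

lemma fv_instrTerm_subset (n k : ℕ) (u : PInstr) : (instrTerm n k u).fv ⊆ Finset.Ioo k n := by
  cases u with
  | plain | pos | neg =>
    exact Finset.union_subset (fv_posRef_subset (by omega)) (fv_posRef_subset (by omega))
  | jump l => cases l with
    | zero => simp [instrTerm, ESTerm.fv]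
    | succ l => exact fv_posRef_subset (by omega)
  | halt => simp [instrTerm, ESTerm.fv]

lemma fv_posTerm_subset (P : List PInstr) (k : ℕ) : (posTerm P k).fv ⊆ Finset.Ioo k P.length := by
  unfold posTerm
  split
  · simp [ESTerm.fv]
  · exact fv_instrTerm_subset _ _ _

lemma fv_substChain_subset (P : List PInstr) (k : ℕ) :
    (substChain P k).fv ⊆ Finset.Ioo k P.length := by
  induction k with
  | zero => exact fv_posTerm_subset P 0
  | succ k ih =>
    intro j hj
    simp only [substChain, ESTerm.fv, Finset.mem_union, Finset.mem_sdiff,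
      Finset.mem_singleton] at hj
    rcases hj with hj | ⟨hj, hne⟩
    · exact fv_posTerm_subset P (k + 1) hj
    · have := Finset.mem_Ioo.mp (ih hj)
      exact Finset.mem_Ioo.mpr ⟨by omega, this.2⟩

end FreeVariables

section Evaluation

variable {P : List PInstr} {k : ℕ} {env : ℕ → Thread}

lemma SuffixEnv.update (h : SuffixEnv P (k + 1) env) :
    SuffixEnv P k (Function.update env (k + 1) (textract (P.drop (k + 1)))) := by
  intro j hkj hj
  rcases eq_or_ne j (k + 1) with rfl | hne
  · exact Function.update_self ..
  · rw [Function.update_of_ne hne]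
    exact h j (by omega) hj

lemma SuffixEnv.eval_posRef (h : SuffixEnv P k env) {j : ℕ} (hj : k < j) :
    (posRef P.length j).eval env = textract (P.drop j) := by
  unfold posRef
  split_ifs with hjn
  · exact h j hj hjn
  · rw [List.drop_eq_nil_of_le (not_lt.mp hjn)]
    simp [ESTerm.eval, textract]

lemma SuffixEnv.eval_posTerm (h : SuffixEnv P k env) :
    (posTerm P k).eval env = textract (P.drop k) := by
  unfold posTerm
  split
  case h_1 hnil => simp [hnil, ESTerm.eval, textract]
  case h_2 u X hcons =>
    have hX : P.drop (k + 1) = X := by rw [← List.drop_drop, hcons, List.drop_one, List.tail_cons]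
    have href : ∀ l, (posRef P.length (k + 1 + l)).eval env = textract (X.drop l) := fun l => by
      rw [h.eval_posRef (by omega), ← hX, List.drop_drop]
    have href₁ : (posRef P.length (k + 1)).eval env = textract X := by simpa using href 0
    have href₂ : (posRef P.length (k + 2)).eval env = textract X.tail := by simpa using href 1
    rw [hcons]
    cases u with
    | jump l => cases l <;> simp [instrTerm, ESTerm.eval, textract, href]
    | _ => simp [instrTerm, ESTerm.eval, textract, href₁, href₂]

lemma SuffixEnv.eval_substChain (h : SuffixEnv P k env) :
    (substChain P k).eval env = textract P := by
  induction k generalizing env with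
  | zero => exact h.eval_posTerm
  | succ k ih =>
    rw [substChain, ESTerm.eval, h.eval_posTerm]
    exact ih h.update

end Evaluation

lemma tsize_instrTerm_le (n k : ℕ) (u : PInstr) : (instrTerm n k u).tsize ≤ 3 := by
  have : ∀ j, (posRef n j).tsize = 1 := fun j => by
    unfold posRef; split_ifs <;> rfl
  cases u with
  | jump l => cases l <;> simp [instrTerm, ESTerm.tsize, this]
  | _ => simp [instrTerm, ESTerm.tsize, this]

lemma tsize_posTerm_le (P : List PInstr) (k : ℕ) : (posTerm P k).tsize ≤ 3 := by
  unfold posTerm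
  split
  · simp [ESTerm.tsize]
  · exact tsize_instrTerm_le _ _ _

lemma tsize_substChain_le (P : List PInstr) (k : ℕ) : (substChain P k).tsize ≤ 4 * k + 3 := by
  induction k with
  | zero => exact tsize_posTerm_le P 0
  | succ k ih =>
    have := tsize_posTerm_le P (k + 1)
    simp only [substChain, ESTerm.tsize]
    omega

/-- Theorem 7 of the paper: linear-size thread extraction is possible with
explicit substitution: there is a translation `ρ` to closed terms of BTA
with explicit substitution that evaluates to the thread extraction and has
size at most `4 · psize(P) + 1`. -/
theorem statement15 :
    ∃ ρ : List PInstr → ESTerm, ∀ P : List PInstr, P ≠ [] →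
      (ρ P).fv = ∅ ∧
      (∀ env : ℕ → Thread, (ρ P).eval env = textract P) ∧
      (ρ P).tsize ≤ 4 * P.length + 1 := by
  refine ⟨fun P => substChain P (P.length - 1), fun P hP => ⟨?_, fun env => ?_, ?_⟩⟩
  · refine Finset.eq_empty_of_forall_notMem fun j hj => ?_
    have := Finset.mem_Ioo.mp (fv_substChain_subset P _ hj)
    omega
  · refine SuffixEnv.eval_substChain fun j hj hjn => ?_
    omega
  · have := tsize_substChain_le P (P.length - 1)
    have := List.length_pos_iff.mpr hP
    dsimp only
    omega
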